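/- arXiv:2001.01874 — 2 statements merged into one kernel-verified Lean document; each statement's English description precedes it below -/
import Mathlib

section
/- Let Γ be a noncrossing inverse pairing on a finite word W, and let U, V be contiguous subwords of W such that every index of U precedes every index of V, the contiguous subword of W spanning from the first index of U to the last index of V is bound by Γ (every index in this span lies between the two elements of some Γ-pair), and: for each index α of U there exist an index α' of U with α ≤ α' and an index β of V such that {α',β} is a Γ-pair, and symmetrically for each index β of V there exist β' ≤ β in V and α in U with {α,β'} a Γ-pair. Then the restriction of Γ to the pairs contained in the index set of the concatenated word UV is a noncrossing inverse pairing on UV. -/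
namespace EarringPaper

variable {D : Type*}

abbrev Letter (D : Type*) := D × Bool

def IsInvLetter (x y : Letter D) : Prop := x.1 = y.1 ∧ x.2 = !y.2

/-- A section (order-convex subset) of the index set. -/
def IsSection {n : ℕ} (S : Set (Fin n)) : Prop :=
  ∀ i ∈ S, ∀ j ∈ S, ∀ k, i ≤ k → k ≤ j → k ∈ S

/-- A noncrossing inverse pairing on the subword of `W` supported on the index set `S`. -/
structure NCIPOn (W : List (Letter D)) (S : Set (Fin W.length))
    (Γ : Set (Fin W.length × Fin W.length)) : Prop where
  memS : ∀ p ∈ Γ, p.1 ∈ S ∧ p.2 ∈ S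
  lt : ∀ p ∈ Γ, p.1 < p.2
  inv : ∀ p ∈ Γ, IsInvLetter (W.get p.1) (W.get p.2)
  disj : ∀ p ∈ Γ, ∀ q ∈ Γ, p ≠ q → p.1 ≠ q.1 ∧ p.1 ≠ q.2 ∧ p.2 ≠ q.1 ∧ p.2 ≠ q.2
  noncross : ∀ p ∈ Γ, ∀ q ∈ Γ, ¬(p.1 < q.1 ∧ q.1 < p.2 ∧ p.2 < q.2)
  covered : ∀ p ∈ Γ, ∀ k ∈ S, p.1 ≤ k → k ≤ p.2 → ∃ q ∈ Γ, q.1 = k ∨ q.2 = k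

/-- A noncrossing inverse pairing on the full word `W`. -/
def NCIP (W : List (Letter D)) (Γ : Set (Fin W.length × Fin W.length)) : Prop :=
  NCIPOn W Set.univ Γ

/-- Lemma on restricting a noncrossing inverse pairing to a concatenation `UV` of two
subwords: if every index of `U` precedes every index of `V`, the span from `U` to `V` is
bound by `Γ`, and the pairing matches `U` with `V` cofinally as stated, then the
restriction of `Γ` to pairs inside `U ∪ V` is a noncrossing inverse pairing on `UV`. -/
theorem ncip_restrict_concat (W : List (Letter D))
    (Γ : Set (Fin W.length × Fin W.length)) (hΓ : NCIP W Γ)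
    (U V : Set (Fin W.length)) (hU : IsSection U) (hV : IsSection V)
    (hUV : ∀ i ∈ U, ∀ j ∈ V, i < j)
    (hbound : ∀ k : Fin W.length, (∃ i ∈ U, ∃ j ∈ V, i ≤ k ∧ k ≤ j) →
      ∃ p ∈ Γ, p.1 ≤ k ∧ k ≤ p.2)
    (hUpair : ∀ α ∈ U, ∃ α' ∈ U, α ≤ α' ∧ ∃ β ∈ V, (α', β) ∈ Γ)
    (hVpair : ∀ β ∈ V, ∃ β' ∈ V, β' ≤ β ∧ ∃ α ∈ U, (α, β') ∈ Γ) :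
    NCIPOn W (U ∪ V) {p ∈ Γ | p.1 ∈ U ∪ V ∧ p.2 ∈ U ∪ V} := by
  constructor
  · exact fun p hp => hp.2
  · exact fun p hp => hΓ.lt p hp.1
  · exact fun p hp => hΓ.inv p hp.1
  · exact fun p hp q hq hne => hΓ.disj p hp.1 q hq.1 hne
  · exact fun p hp q hq => hΓ.noncross p hp.1 q hq.1
  · intro p hp k hk hk1 hk2
    obtain ⟨hpΓ, hp1, hp2⟩ := hp
    obtain ⟨q, hq, hqk⟩ := hΓ.covered p hpΓ k (Set.mem_univ k) hk1 hk2
    have same : ∀ a ∈ Γ, ∀ b ∈ Γ, (a.1 = b.1 ∨ a.2 = b.2) → a = b := by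
      intro a ha b hb h
      by_contra hne
      have d := hΓ.disj a ha b hb hne
      rcases h with h | h
      · exact d.1 h
      · exact d.2.2.2 h
    refine ⟨q, ⟨hq, ?_⟩, hqk⟩
    by_cases hqp : q = p
    · subst hqp; exact ⟨hp1, hp2⟩
    have d := hΓ.disj q hq p hpΓ hqp
    have hq12 : q.1 < q.2 := hΓ.lt q hq
    rcases hqk with h1 | h2
    · -- q.1 = k
      have hk1' : p.1 < k := hk1.lt_of_ne (fun h => d.1 (h1.trans h.symm))
      have hk2' : k < p.2 := hk2.lt_of_ne (fun h => d.2.1 (h1.trans h))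
      have hnpq := hΓ.noncross p hpΓ q hq
      have hq2p2 : q.2 < p.2 := by
        rcases lt_trichotomy q.2 p.2 with h | h | h
        · exact h
        · exact (d.2.2.2 h).elim
        · exact (hnpq ⟨h1.symm ▸ hk1', h1.symm ▸ hk2', h⟩).elim
      refine ⟨by rw [h1]; exact hk, ?_⟩
      rcases hk with hkU | hkV
      · obtain ⟨α', hα'U, hkα', β, hβV, hr⟩ := hUpair k hkU
        by_cases hα'k : α' = k
        · have hqr : q = (α', β) := same q hq (α', β) hr (Or.inl (by rw [h1, hα'k]))
          exact Or.inr (by rw [hqr]; exact hβV)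
        · have hkα'' : k < α' := hkα'.lt_of_ne (Ne.symm hα'k)
          rcases lt_trichotomy q.2 α' with h | h | h
          · exact Or.inl (hU k hkU α' hα'U q.2 (h1 ▸ hq12).le h.le)
          · exact Or.inl (by rw [h]; exact hα'U)
          · have hnqr := hΓ.noncross q hq (α', β) hr
            have hq2β : β < q.2 := by
              rcases lt_trichotomy β q.2 with h' | h' | h'
              · exact h'
              · exfalso
                have hqr : q = (α', β) := same q hq (α', β) hr (Or.inr h'.symm)
                rw [hqr] at h1
                exact hα'k h1
              · exact (hnqr ⟨h1.symm ▸ hkα'', h, h'⟩).elim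
            have hp2V : p.2 ∈ V := by
              rcases hp2 with h' | h'
              · exact absurd (hUV p.2 h' β hβV)
                  (not_lt.mpr (hq2β.trans hq2p2).le)
              · exact h'
            exact Or.inr (hV β hβV p.2 hp2V q.2 hq2β.le hq2p2.le)
      · have hp2V : p.2 ∈ V := by
          rcases hp2 with h' | h'
          · exact absurd (hUV p.2 h' k hkV) (not_lt.mpr hk2)
          · exact h'
        exact Or.inr (hV k hkV p.2 hp2V q.2 (h1 ▸ hq12).le hq2p2.le)
    · -- q.2 = k
      have hk1' : p.1 < k := hk1.lt_of_ne (fun h => d.2.2.1 (h2.trans h.symm))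
      have hk2' : k < p.2 := hk2.lt_of_ne (fun h => d.2.2.2 (h2.trans h))
      have hnqp := hΓ.noncross q hq p hpΓ
      have hq1p1 : p.1 < q.1 := by
        rcases lt_trichotomy q.1 p.1 with h | h | h
        · exact (hnqp ⟨h, h2.symm ▸ hk1', h2.symm ▸ hk2'⟩).elim
        · exact (d.1 h).elim
        · exact h
      refine ⟨?_, by rw [h2]; exact hk⟩
      rcases hk with hkU | hkV
      · have hp1U : p.1 ∈ U := by
          rcases hp1 with h' | h'
          · exact h'
          · exact absurd (hUV k hkU p.1 h') (not_lt.mpr hk1)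
        exact Or.inl (hU p.1 hp1U k hkU q.1 hq1p1.le (h2 ▸ hq12).le)
      · obtain ⟨β', hβ'V, hβ'k, α, hαU, hs⟩ := hVpair k hkV
        by_cases hβk : β' = k
        · have hqs : q = (α, β') := same q hq (α, β') hs (Or.inr (by rw [h2, hβk]))
          exact Or.inl (by rw [hqs]; exact hαU)
        · have hβ'k' : β' < k := hβ'k.lt_of_ne hβk
          rcases lt_trichotomy q.1 β' with h | h | h
          · have hαq1 : q.1 < α := by
              rcases lt_trichotomy α q.1 with h' | h' | h'
              · exact (hΓ.noncross (α, β') hs q hq ⟨h', h, h2.symm ▸ hβ'k'⟩).elim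
              · exfalso
                have hqs : q = (α, β') := same q hq (α, β') hs (Or.inl h'.symm)
                rw [hqs] at h2
                exact hβk h2
              · exact h'
            rcases hp1 with h' | h'
            · exact Or.inl (hU p.1 h' α hαU q.1 hq1p1.le hαq1.le)
            · exact Or.inr (hV p.1 h' k hkV q.1 hq1p1.le (h2 ▸ hq12).le)
          · exact Or.inr (by rw [h]; exact hβ'V)
          · exact Or.inr (hV β' hβ'V k hkV q.1 h.le (h2 ▸ hq12).le)

end EarringPaper
end

section
/- With E(X,D) as above, the quotient map σ : E(X,D) → H obtained by collapsing X × {o} to a single point (with the induced metric-quotient distance: the distance between the collapsed point * and (d_n,u) is ρ_C(u,o)/n, and the distance between (d_m,u) and (d_n,v) for m ≠ n is ρ_C(u,o)/m + ρ_C(v,o)/n) yields a space homeomorphic to the Hawaiian earring, and σ is continuous. -/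
/-! The quotient is modelled by the circles `{n} × S¹` with their base points identified, and
`⟦(n, u)⟧ ↦ (u - 1) / n ∈ ℂ ≅ ℝ²` maps it bijectively onto `H`; this map is 1-Lipschitz from the
quotient distance. For the inverse, inversion `z ↦ z⁻¹` sends `C_n \ {0}` onto the line
`re = -n / 2`, so the index `n = -2 re z⁻¹` depends continuously on `z ≠ 0` and is therefore
locally constant on `H \ {0}`; on a single circle, and near the base point, the quotient distance
is the Euclidean one. Finally `σ` is 1-Lipschitz from `ρ`: on a single circle the two distances
agree, and otherwise `ρ` dominates `ρ_C(u,o)/m + ρ_C(v,o)/n`, which dominates the quotient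
distance. -/

open Classical

noncomputable section

namespace EarringPaper

variable {X : Type*} [MetricSpace X]

def wt (d : ℕ+ → X) (x : X) : ℝ :=
  if h : ∃ n : ℕ+, x = d n then 1 / (h.choose : ℝ) else 0

def rho (d : ℕ+ → X) (p q : X × Circle) : ℝ :=
  if p.1 = q.1 ∧ ∃ n : ℕ+, p.1 = d n then wt d p.1 * dist p.2 q.2
  else dist p.1 q.1 + wt d p.1 * dist p.2 1 + wt d q.1 * dist q.2 1

def ECar (d : ℕ+ → X) : Set (X × Circle) := {p | p.2 = 1 ∨ ∃ n : ℕ+, p.1 = d n}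

/-- The Hawaiian earring `H = ⋃_{n ≥ 1} C_n ⊆ ℝ²`, `C_n` the circle of radius `1/n`
centered at `(-1/n, 0)`. -/
def HEset : Set (ℝ × ℝ) :=
  {p | ∃ n : ℕ+, (p.1 + 1 / (n : ℝ)) ^ 2 + p.2 ^ 2 = (1 / (n : ℝ)) ^ 2}

/-- The model of the metric quotient: the disjoint circles `{n} × S¹` with all the
basepoints `(n, o)` identified to a single point `*`. -/
def wedgeSetoid : Setoid (ℕ+ × Circle) where
  r p q := p = q ∨ (p.2 = 1 ∧ q.2 = 1)
  iseqv := by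
    constructor
    · intro x; exact Or.inl rfl
    · rintro x y (rfl | ⟨h1, h2⟩)
      · exact Or.inl rfl
      · exact Or.inr ⟨h2, h1⟩
    · rintro x y z (rfl | ⟨h1, h2⟩) (rfl | ⟨h3, h4⟩)
      · exact Or.inl rfl
      · exact Or.inr ⟨h3, h4⟩
      · exact Or.inr ⟨h1, h2⟩
      · exact Or.inr ⟨h1, h4⟩

/-- The metric quotient map `σ` collapsing `X × {o}` to the point `*`. -/
def sigmaQ (d : ℕ+ → X) (p : X × Circle) : Quotient wedgeSetoid :=
  if h : ∃ n : ℕ+, p.1 = d n then ⟦(h.choose, p.2)⟧ else ⟦(1, 1)⟧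

open Complex

lemma dist_circle (u v : Circle) : dist u v = ‖(u : ℂ) - v‖ := dist_eq_norm (u : ℂ) v

def earringPoint (p : ℕ+ × Circle) : ℂ := ((p.2 : ℂ) - 1) / (p.1 : ℂ)

lemma earringPoint_eq_zero_iff {p : ℕ+ × Circle} : earringPoint p = 0 ↔ p.2 = 1 := by
  simp [earringPoint, sub_eq_zero, Circle.coe_eq_one]

lemma earringPoint_one (n : ℕ+) : earringPoint (n, 1) = 0 := earringPoint_eq_zero_iff.2 rfl

lemma norm_earringPoint (n : ℕ+) (u : Circle) : ‖earringPoint (n, u)‖ = dist u 1 / n := by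
  rw [earringPoint, norm_div, dist_circle]
  simp

lemma dist_earringPoint {n : ℕ+} (u v : Circle) :
    dist (earringPoint (n, u)) (earringPoint (n, v)) = dist u v / n := by
  rw [dist_eq_norm, earringPoint, earringPoint, ← sub_div, sub_sub_sub_cancel_right, norm_div,
    dist_circle]
  simp

lemma re_inv_coe_sub_one {u : Circle} (hu : u ≠ 1) : ((u : ℂ) - 1)⁻¹.re = -1 / 2 := by
  have hre : (u : ℂ).re ≠ 1 := by
    intro h
    have him : (u : ℂ).im = 0 := by
      have := Circle.normSq_coe u
      rw [normSq_apply, h] at this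
      nlinarith
    exact hu (Circle.ext (Complex.ext (by simpa using h) (by simpa using him)))
  have hsq : normSq ((u : ℂ) - 1) = 2 * (1 - (u : ℂ).re) := by
    have := Circle.normSq_coe u
    rw [normSq_apply] at this ⊢
    simp only [sub_re, one_re, sub_im, one_im, sub_zero]
    linear_combination this
  rw [inv_re, hsq, sub_re, one_re]
  field_simp [sub_ne_zero.mpr hre.symm]
  ring

lemma neg_two_mul_re_inv_earringPoint {p : ℕ+ × Circle} (hp : p.2 ≠ 1) :
    -2 * (earringPoint p)⁻¹.re = p.1 := by
  rw [earringPoint, inv_div, div_eq_mul_inv, ← ofReal_natCast, re_ofReal_mul,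
    re_inv_coe_sub_one hp]
  ring

lemma earringPoint_eq_earringPoint_iff {p q : ℕ+ × Circle} :
    earringPoint p = earringPoint q ↔ wedgeSetoid p q := by
  constructor
  · intro h
    by_cases hp : p.2 = 1
    · exact Or.inr ⟨hp, earringPoint_eq_zero_iff.1 (h ▸ earringPoint_eq_zero_iff.2 hp)⟩
    · have hq : q.2 ≠ 1 := fun hq =>
        hp (earringPoint_eq_zero_iff.1 (h.trans (earringPoint_eq_zero_iff.2 hq)))
      have h1 : p.1 = q.1 := by
        have := (neg_two_mul_re_inv_earringPoint hp).symm.trans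
          (h ▸ neg_two_mul_re_inv_earringPoint hq)
        exact_mod_cast this
      refine Or.inl (Prod.ext h1 (Circle.ext ?_))
      have hn : ((p.1 : ℕ) : ℂ) ≠ 0 := by exact_mod_cast p.1.ne_zero
      rw [earringPoint, earringPoint, ← h1, div_left_inj' hn] at h
      simpa using h
  · rintro (rfl | ⟨hp, hq⟩)
    · rfl
    · rw [earringPoint_eq_zero_iff.2 hp, earringPoint_eq_zero_iff.2 hq]

lemma exists_forall_fst_eq_of_dist_lt {p : ℕ+ × Circle} (hp : p.2 ≠ 1) :
    ∃ δ > 0, ∀ q : ℕ+ × Circle, dist (earringPoint q) (earringPoint p) < δ →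
      q.2 = 1 ∨ q.1 = p.1 := by
  have hcont : ContinuousAt (fun z : ℂ => -2 * z⁻¹.re) (earringPoint p) := by
    have : earringPoint p ≠ 0 := mt earringPoint_eq_zero_iff.1 hp
    exact ((continuous_re.continuousAt.comp (continuousAt_inv₀ this)).const_mul (-2) :)
  obtain ⟨δ, hδ, hclose⟩ := Metric.continuousAt_iff.1 hcont 1 one_pos
  refine ⟨δ, hδ, fun q hq => or_iff_not_imp_left.2 fun hq1 => ?_⟩
  have := hclose hq
  rw [neg_two_mul_re_inv_earringPoint hq1, neg_two_mul_re_inv_earringPoint hp,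
    Real.dist_eq] at this
  have : |((q.1 : ℤ) - p.1 : ℤ)| < 1 := by exact_mod_cast this
  have := Int.abs_lt_one_iff.1 this
  exact PNat.coe_injective (by omega)

lemma HEset_eq_range : HEset = Set.range (fun p => equivRealProd (earringPoint p)) := by
  ext ⟨x, y⟩
  simp only [HEset, Set.mem_ofPred_eq, Set.mem_range, Prod.ext_iff, equivRealProd_apply,
    earringPoint, div_natCast_re, div_natCast_im, sub_re, sub_im, one_re, one_im, sub_zero]
  have hsq (u : Circle) : (u : ℂ).re ^ 2 + (u : ℂ).im ^ 2 = 1 := by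
    simpa [normSq_apply, sq] using Circle.normSq_coe u
  constructor
  · rintro ⟨n, hn⟩
    have hu : (n : ℂ) * ⟨x, y⟩ + 1 ∈ Submonoid.unitSphere ℂ := by
      refine mem_sphere_zero_iff_norm.2
        ((pow_eq_one_iff_of_nonneg (norm_nonneg _) two_ne_zero).1 ?_)
      rw [← normSq_eq_norm_sq, normSq_apply]
      simp only [add_re, mul_re, natCast_re, natCast_im, zero_mul, sub_zero, one_re, add_im,
        mul_im, add_zero, one_im]
      field_simp at hn
      linear_combination hn
    refine ⟨(n, ⟨_, hu⟩), ?_, ?_⟩ <;> simp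
  · rintro ⟨⟨n, u⟩, rfl, rfl⟩
    refine ⟨n, ?_⟩
    field_simp
    linear_combination hsq u

lemma earringPoint_mem_HEset (p : ℕ+ × Circle) : equivRealProd (earringPoint p) ∈ HEset :=
  HEset_eq_range ▸ ⟨p, rfl⟩

def earringMap : Quotient wedgeSetoid → HEset :=
  Quotient.lift (fun p => ⟨equivRealProd (earringPoint p), earringPoint_mem_HEset p⟩)
    fun _ _ h => Subtype.ext (congrArg equivRealProd (earringPoint_eq_earringPoint_iff.2 h))

lemma earringMap_bijective : Function.Bijective earringMap := by
  constructor
  · rintro ⟨p⟩ ⟨q⟩ h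
    exact Quotient.sound (earringPoint_eq_earringPoint_iff.1
      (equivRealProd.injective (congrArg Subtype.val h)))
  · rintro ⟨x, hx⟩
    obtain ⟨p, rfl⟩ := HEset_eq_range ▸ hx
    exact ⟨⟦p⟧, rfl⟩

def earringEquiv : Quotient wedgeSetoid ≃ HEset := Equiv.ofBijective _ earringMap_bijective

lemma earringEquiv_mk (p : ℕ+ × Circle) :
    (earringEquiv ⟦p⟧ : ℝ × ℝ) = equivRealProd (earringPoint p) := rfl

def wedgeDist (p q : ℕ+ × Circle) : ℝ :=
  if p.1 = q.1 then dist p.2 q.2 / p.1 else dist p.2 1 / p.1 + dist q.2 1 / q.1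

lemma dQ_mk_eq_wedgeDist {dQ : Quotient wedgeSetoid → Quotient wedgeSetoid → ℝ}
    (hdQ₁ : ∀ (n : ℕ+) (u v : Circle), dQ ⟦(n, u)⟧ ⟦(n, v)⟧ = dist u v / (n : ℝ))
    (hdQ₂ : ∀ (m n : ℕ+) (u v : Circle), m ≠ n →
      dQ ⟦(m, u)⟧ ⟦(n, v)⟧ = dist u 1 / (m : ℝ) + dist v 1 / (n : ℝ))
    (p q : ℕ+ × Circle) : dQ ⟦p⟧ ⟦q⟧ = wedgeDist p q := by
  obtain ⟨m, u⟩ := p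
  obtain ⟨n, v⟩ := q
  unfold wedgeDist
  split_ifs with h
  · cases h; exact hdQ₁ m u v
  · exact hdQ₂ m n u v h

lemma wedgeDist_le_add (p q : ℕ+ × Circle) :
    wedgeDist p q ≤ dist p.2 1 / p.1 + dist q.2 1 / q.1 := by
  unfold wedgeDist
  split_ifs with h
  · rw [← h, ← add_div]
    gcongr
    exact dist_triangle_right _ _ _
  · rfl

lemma dist_earringPoint_le_wedgeDist (p q : ℕ+ × Circle) :
    dist (earringPoint p) (earringPoint q) ≤ wedgeDist p q := by
  obtain ⟨m, u⟩ := p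
  obtain ⟨n, v⟩ := q
  unfold wedgeDist
  split_ifs with h
  · cases h; exact (dist_earringPoint u v).le
  · rw [← norm_earringPoint, ← norm_earringPoint, dist_eq_norm]
    exact norm_sub_le _ _

lemma wedgeDist_eq_dist_earringPoint {p q : ℕ+ × Circle} (h : p.1 = q.1 ∨ p.2 = 1 ∨ q.2 = 1) :
    wedgeDist p q = dist (earringPoint p) (earringPoint q) := by
  obtain ⟨m, u⟩ := p
  obtain ⟨n, v⟩ := q
  unfold wedgeDist
  split_ifs with hmn
  · cases hmn; exact (dist_earringPoint u v).symm
  · obtain hmn' | rfl | rfl := h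
    · exact absurd hmn' hmn
    · simp [← norm_earringPoint, earringPoint_one]
    · simp [← norm_earringPoint, earringPoint_one]

lemma dist_earringEquiv_le_wedgeDist (p q : ℕ+ × Circle) :
    dist (earringEquiv ⟦p⟧) (earringEquiv ⟦q⟧) ≤ wedgeDist p q := by
  rw [Subtype.dist_eq, earringEquiv_mk, earringEquiv_mk]
  calc _ ≤ dist (earringPoint p) (earringPoint q) := by
        simpa using lipschitz_equivRealProd.dist_le_mul (earringPoint p) (earringPoint q)
    _ ≤ wedgeDist p q := dist_earringPoint_le_wedgeDist p q

lemma exists_wedgeDist_eq_of_dist_lt (p : ℕ+ × Circle) : ∃ δ > 0, ∀ q : ℕ+ × Circle,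
    dist (earringPoint q) (earringPoint p) < δ →
      wedgeDist p q = dist (earringPoint p) (earringPoint q) := by
  by_cases hp : p.2 = 1
  · exact ⟨1, one_pos, fun q _ => wedgeDist_eq_dist_earringPoint (.inr (.inl hp))⟩
  obtain ⟨δ, hδ, hfst⟩ := exists_forall_fst_eq_of_dist_lt hp
  refine ⟨δ, hδ, fun q hq => wedgeDist_eq_dist_earringPoint ?_⟩
  obtain hq1 | hfst := hfst q hq
  · exact .inr (.inr hq1)
  · exact .inl hfst.symm

lemma exists_forall_wedgeDist_le (p : ℕ+ × Circle) : ∃ δ > 0, ∀ q : ℕ+ × Circle,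
    dist (earringEquiv ⟦p⟧) (earringEquiv ⟦q⟧) < δ →
      wedgeDist p q ≤ 2 * dist (earringEquiv ⟦p⟧) (earringEquiv ⟦q⟧) := by
  obtain ⟨δ, hδ, heq⟩ := exists_wedgeDist_eq_of_dist_lt p
  refine ⟨δ / 2, by positivity, fun q hq => ?_⟩
  rw [Subtype.dist_eq, earringEquiv_mk, earringEquiv_mk] at hq ⊢
  have hle : dist (earringPoint p) (earringPoint q) ≤
      2 * dist (equivRealProd (earringPoint p)) (equivRealProd (earringPoint q)) := by
    refine (antilipschitz_equivRealProd.le_mul_dist _ _).trans ?_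
    gcongr
    rw [Real.coe_sqrt, NNReal.coe_ofNat, Real.sqrt_le_left zero_le_two]
    norm_num
  rw [heq q (by rw [dist_comm]; linarith)]
  exact hle

section SigmaRep

variable {Y : Type*} (d : ℕ+ → Y)

def sigmaRep (x : Y × Circle) : ℕ+ × Circle :=
  if h : ∃ n : ℕ+, x.1 = d n then (h.choose, x.2) else (1, 1)

lemma sigmaQ_eq_mk (x : Y × Circle) : sigmaQ d x = ⟦sigmaRep d x⟧ := by
  unfold sigmaQ sigmaRep
  split_ifs <;> rfl

lemma dist_sigmaRep_div (x : Y × Circle) :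
    dist (sigmaRep d x).2 1 / (sigmaRep d x).1 = wt d x.1 * dist x.2 1 := by
  unfold sigmaRep wt
  split_ifs <;> simp [div_eq_inv_mul]

end SigmaRep

lemma wedgeDist_sigmaRep_le_rho (d : ℕ+ → X) (x y : X × Circle) :
    wedgeDist (sigmaRep d x) (sigmaRep d y) ≤ rho d x y := by
  unfold rho
  split_ifs with h
  · obtain ⟨a, u⟩ := x
    obtain ⟨b, v⟩ := y
    obtain ⟨rfl : a = b, hex⟩ := h
    simp only [sigmaRep, wt, wedgeDist, dif_pos hex, if_true]
    rw [div_eq_inv_mul, one_div]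
  · calc wedgeDist (sigmaRep d x) (sigmaRep d y)
        ≤ wt d x.1 * dist x.2 1 + wt d y.1 * dist y.2 1 := by
          simpa only [dist_sigmaRep_div] using wedgeDist_le_add (sigmaRep d x) (sigmaRep d y)
      _ ≤ _ := by linarith [dist_nonneg (x := x.1) (y := y.1)]

theorem metric_quotient_homeo_hawaiian_general (d : ℕ+ → X)
    (dQ : Quotient wedgeSetoid → Quotient wedgeSetoid → ℝ)
    (hdQ₁ : ∀ (n : ℕ+) (u v : Circle), dQ ⟦(n, u)⟧ ⟦(n, v)⟧ = dist u v / (n : ℝ))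
    (hdQ₂ : ∀ (m n : ℕ+) (u v : Circle), m ≠ n →
      dQ ⟦(m, u)⟧ ⟦(n, v)⟧ = dist u 1 / (m : ℝ) + dist v 1 / (n : ℝ)) :
    ∃ φ : Quotient wedgeSetoid ≃ HEset,
      (∀ q : Quotient wedgeSetoid, ∀ ε > (0 : ℝ), ∃ δ > (0 : ℝ),
        ∀ q' : Quotient wedgeSetoid, dQ q q' < δ → dist (φ q) (φ q') < ε) ∧
      (∀ h : HEset, ∀ ε > (0 : ℝ), ∃ δ > (0 : ℝ),
        ∀ h' : HEset, dist h h' < δ → dQ (φ.symm h) (φ.symm h') < ε) ∧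
      (∀ p : ECar d, ∀ ε > (0 : ℝ), ∃ δ > (0 : ℝ), ∀ q : ECar d,
        rho d p.val q.val < δ → dQ (sigmaQ d p.val) (sigmaQ d q.val) < ε) := by
  have hdQ := dQ_mk_eq_wedgeDist hdQ₁ hdQ₂
  refine ⟨earringEquiv, ?_, ?_, ?_⟩
  · intro q ε hε
    obtain ⟨p, rfl⟩ := Quotient.mk_surjective q
    refine ⟨ε, hε, fun q' hq' => ?_⟩
    obtain ⟨q, rfl⟩ := Quotient.mk_surjective q'
    rw [hdQ] at hq'
    exact (dist_earringEquiv_le_wedgeDist p q).trans_lt hq'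
  · intro h ε hε
    obtain ⟨p, rfl⟩ := (earringEquiv.surjective.comp Quotient.mk_surjective) h
    obtain ⟨δ, hδ, hle⟩ := exists_forall_wedgeDist_le p
    refine ⟨min δ (ε / 2), by positivity, fun h' hh' => ?_⟩
    obtain ⟨q, rfl⟩ := (earringEquiv.surjective.comp Quotient.mk_surjective) h'
    simp only [Function.comp_apply, Equiv.symm_apply_apply, hdQ] at hh' ⊢
    have hwedge := hle q (hh'.trans_le (min_le_left _ _))
    have hclose := hh'.trans_le (min_le_right _ _)
    linarith
  · intro p ε hε
    refine ⟨ε, hε, fun q hq => ?_⟩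
    rw [sigmaQ_eq_mk, sigmaQ_eq_mk, hdQ]
    exact (wedgeDist_sigmaRep_le_rho d p q).trans_lt hq

/-- The metric quotient of `E(X,D)` obtained by collapsing `X × {o}` to one point, with
the quotient distance (`ρ_C(u,o)/n` from `*` to a point of the `n`-th circle, and
`ρ_C(u,o)/m + ρ_C(v,o)/n` between points of distinct circles), is homeomorphic to the
Hawaiian earring, and `σ` is continuous from `ρ` to this quotient distance. -/
theorem metric_quotient_homeo_hawaiian (d : ℕ+ → X)
    (hd : Function.Injective d) (hdense : DenseRange d)
    (dQ : Quotient wedgeSetoid → Quotient wedgeSetoid → ℝ)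
    (hdQ₁ : ∀ (n : ℕ+) (u v : Circle), dQ ⟦(n, u)⟧ ⟦(n, v)⟧ = dist u v / (n : ℝ))
    (hdQ₂ : ∀ (m n : ℕ+) (u v : Circle), m ≠ n →
      dQ ⟦(m, u)⟧ ⟦(n, v)⟧ = dist u 1 / (m : ℝ) + dist v 1 / (n : ℝ)) :
    ∃ φ : Quotient wedgeSetoid ≃ HEset,
      (∀ q : Quotient wedgeSetoid, ∀ ε > (0 : ℝ), ∃ δ > (0 : ℝ),
        ∀ q' : Quotient wedgeSetoid, dQ q q' < δ → dist (φ q) (φ q') < ε) ∧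
      (∀ h : HEset, ∀ ε > (0 : ℝ), ∃ δ > (0 : ℝ),
        ∀ h' : HEset, dist h h' < δ → dQ (φ.symm h) (φ.symm h') < ε) ∧
      (∀ p : ECar d, ∀ ε > (0 : ℝ), ∃ δ > (0 : ℝ), ∀ q : ECar d,
        rho d p.val q.val < δ → dQ (sigmaQ d p.val) (sigmaQ d q.val) < ε) :=
  metric_quotient_homeo_hawaiian_general d dQ hdQ₁ hdQ₂

end EarringPaper
end
end
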